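/- arXiv:2401.05664 — 2 statements merged into one kernel-verified Lean document; each statement's English description precedes it below -/
import Mathlib

section
/- Let X = (X₁,…,Xₙ) be a random vector on ℝⁿ whose law has a density p with respect to Lebesgue measure, with marginal densities p₁,…,pₙ that are strictly positive, and with marginal cumulative distribution functions F₁,…,Fₙ that are continuous and strictly increasing. Define the copula density c : (0,1)ⁿ → ℝ by c(u₁,…,uₙ) = p(F₁⁻¹(u₁),…,Fₙ⁻¹(uₙ)) / ∏ᵢ pᵢ(Fᵢ⁻¹(uᵢ)). Assume the functions x ↦ p(x)·log(p(x)/∏ᵢ pᵢ(xᵢ)) and u ↦ c(u)·log c(u) are Lebesgue integrable. Then the mutual information of X equals the negative of its copula entropy, i.e. ∫_{ℝⁿ} p(x) · log( p(x) / ∏ᵢ pᵢ(xᵢ) ) dx = ∫_{(0,1)ⁿ} c(u) · log c(u) du. -/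
/-!
The componentwise quantile map `Q u = (F₁⁻¹ u₁, …, Fₙ⁻¹ uₙ)` pushes the uniform measure on
`(0,1)ⁿ` forward to the product of the marginal laws, because on `(0,1)` one has
`Fᵢ⁻¹ u ≤ t ↔ u ≤ Fᵢ t`. That product is the measure with density `∏ pᵢ`, and the copula density
is `φ ∘ Q` with `φ = p / ∏ pᵢ`; so both sides equal the integral of `φ log φ` against the product
of the marginals.
-/

open MeasureTheory ProbabilityTheory Set
open scoped ENNReal

theorem lintegral_fin_nat_prod_eq_prod {n : ℕ} {α : Type*} [MeasurableSpace α]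
    {μ : Fin n → Measure α} [∀ i, SigmaFinite (μ i)] {f : Fin n → α → ℝ≥0∞}
    (hf : ∀ i, Measurable (f i)) :
    ∫⁻ x, ∏ i, f i (x i) ∂Measure.pi μ = ∏ i, ∫⁻ t, f i t ∂μ i := by
  induction n with
  | zero => simp
  | succ n ih =>
    calc
      _ = ∫⁻ x : α × (Fin n → α), f 0 x.1 * ∏ i : Fin n, f i.succ (x.2 i)
          ∂(μ 0).prod (Measure.pi fun i => μ i.succ) := by
        rw [← (measurePreserving_piFinSuccAbove μ 0).symm.lintegral_comp (by fun_prop)]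
        simp_rw [MeasurableEquiv.piFinSuccAbove_symm_apply, Fin.insertNthEquiv,
          Fin.prod_univ_succ, Fin.insertNth_zero, Equiv.coe_fn_mk, Fin.cons_succ,
          Fin.zero_succAbove, cast_eq, Fin.cons_zero]
      _ = (∫⁻ t, f 0 t ∂μ 0) * ∏ i : Fin n, ∫⁻ t, f i.succ t ∂μ i.succ := by
        rw [← ih fun i => hf i.succ]
        exact lintegral_prod_mul (hf 0).aemeasurable (Finset.measurable_prod _
          fun (i : Fin n) _ => (hf i.succ).comp (measurable_pi_apply i)).aemeasurable
      _ = ∏ i, ∫⁻ t, f i t ∂μ i := by rw [Fin.prod_univ_succ]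

theorem lintegral_fintype_prod_eq_prod {ι α : Type*} [Fintype ι] [MeasurableSpace α]
    {μ : ι → Measure α} [∀ i, SigmaFinite (μ i)] {f : ι → α → ℝ≥0∞}
    (hf : ∀ i, Measurable (f i)) :
    ∫⁻ x, ∏ i, f i (x i) ∂Measure.pi μ = ∏ i, ∫⁻ t, f i t ∂μ i := by
  let e := (Fintype.equivFin ι).symm
  rw [← (measurePreserving_piCongrLeft μ e).lintegral_comp (by fun_prop)]
  simp_rw [← e.prod_comp, MeasurableEquiv.coe_piCongrLeft, Equiv.piCongrLeft_apply_apply]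
  exact lintegral_fin_nat_prod_eq_prod fun i => hf (e i)

theorem MeasureTheory.Measure.pi_withDensity {ι α : Type*} [Fintype ι] [MeasurableSpace α]
    (μ : ι → Measure α) [∀ i, SigmaFinite (μ i)] {f : ι → α → ℝ≥0∞} (hf : ∀ i, Measurable (f i))
    [∀ i, SigmaFinite ((μ i).withDensity (f i))] :
    Measure.pi (fun i => (μ i).withDensity (f i))
      = (Measure.pi μ).withDensity fun x => ∏ i, f i (x i) := by
  refine Measure.pi_eq fun s hs => ?_
  rw [withDensity_apply _ (.univ_pi hs), Measure.restrict_pi_pi, lintegral_fintype_prod_eq_prod hf]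
  simp_rw [withDensity_apply _ (hs _)]

theorem isProbabilityMeasure_withDensity_ofReal {α : Type*} [MeasurableSpace α]
    {μ : Measure α} {f : α → ℝ} (hf_nonneg : 0 ≤ᵐ[μ] f) (hf_one : ∫ x, f x ∂μ = 1) :
    IsProbabilityMeasure (μ.withDensity fun x => ENNReal.ofReal (f x)) := by
  refine ⟨?_⟩
  rw [withDensity_apply _ MeasurableSet.univ, Measure.restrict_univ,
    ← ofReal_integral_eq_lintegral_ofReal (integrable_of_integral_eq_one hf_one) hf_nonneg,
    hf_one, ENNReal.ofReal_one]

theorem cdf_withDensity_ofReal {μ : Measure ℝ} {f : ℝ → ℝ} (hf : AEStronglyMeasurable f μ)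
    (hf_nonneg : 0 ≤ᵐ[μ] f) [IsProbabilityMeasure (μ.withDensity fun t => ENNReal.ofReal (f t))]
    (t : ℝ) : cdf (μ.withDensity fun t => ENNReal.ofReal (f t)) t = ∫ s in Iic t, f s ∂μ := by
  rw [cdf_eq_real, measureReal_def, withDensity_apply _ measurableSet_Iic,
    integral_eq_lintegral_of_nonneg_ae (ae_restrict_of_ae hf_nonneg) hf.restrict]

theorem map_restrict_Ioo_eq_of_le_iff_le_cdf {μ : Measure ℝ} [IsProbabilityMeasure μ] {Q : ℝ → ℝ}
    (hQ : ∀ u ∈ Ioo (0 : ℝ) 1, ∀ t, Q u ≤ t ↔ u ≤ cdf μ t) :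
    (volume.restrict (Ioo (0 : ℝ) 1)).map Q = μ := by
  have hQ_meas : AEMeasurable Q (volume.restrict (Ioo (0 : ℝ) 1)) :=
    aemeasurable_restrict_of_monotoneOn measurableSet_Ioo fun u hu v hv huv =>
      (hQ u hu _).2 (huv.trans ((hQ v hv _).1 le_rfl))
  refine Measure.ext_of_Iic _ _ fun t => ?_
  -- `cdf μ t` may be `1`, which `Ioo 0 1` excludes.
  have hpre : Q ⁻¹' Iic t ∩ Ioo 0 1 = Ioc 0 (cdf μ t) \ {1} := by
    ext u
    simp only [mem_inter_iff, mem_preimage, mem_Iic, mem_Ioo, mem_sdiff, mem_Ioc,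
      mem_singleton_iff]
    constructor
    · rintro ⟨hut, h0, h1⟩
      exact ⟨⟨h0, (hQ u ⟨h0, h1⟩ t).1 hut⟩, h1.ne⟩
    · rintro ⟨⟨h0, hle⟩, hne⟩
      have h1 : u < 1 := lt_of_le_of_ne (hle.trans (cdf_le_one μ t)) hne
      exact ⟨(hQ u ⟨h0, h1⟩ t).2 hle, h0, h1⟩
  rw [Measure.map_apply_of_aemeasurable hQ_meas measurableSet_Iic,
    Measure.restrict_apply' measurableSet_Ioo, hpre, measure_sdiff_null (measure_singleton 1),
    Real.volume_Ioc, sub_zero, ofReal_cdf]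

theorem map_restrict_pi_Ioo_eq_pi {ι : Type*} [Fintype ι] {μ : ι → Measure ℝ}
    [∀ i, IsProbabilityMeasure (μ i)] {Q : ι → ℝ → ℝ}
    (hQ : ∀ i, ∀ u ∈ Ioo (0 : ℝ) 1, ∀ t, Q i u ≤ t ↔ u ≤ cdf (μ i) t) :
    (volume.restrict (univ.pi fun _ : ι => Ioo (0 : ℝ) 1)).map (fun u i => Q i (u i))
      = Measure.pi μ := by
  have hmap i := map_restrict_Ioo_eq_of_le_iff_le_cdf (hQ i)
  have : ∀ i, SigmaFinite ((volume.restrict (Ioo (0 : ℝ) 1)).map (Q i)) := fun i => by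
    rw [hmap i]; infer_instance
  rw [volume_pi, Measure.restrict_pi_pi, Measure.pi_map_pi fun i =>
    AEMeasurable.of_map_ne_zero (by rw [hmap i]; exact IsProbabilityMeasure.ne_zero _)]
  simp_rw [hmap]

theorem integral_mul_log_div_eq_integral_withDensity {α : Type*} [MeasurableSpace α]
    {μ : Measure α} {f g : α → ℝ} (hg : Measurable g) (hg_pos : ∀ x, 0 < g x) :
    ∫ x, f x * Real.log (f x / g x) ∂μ
      = ∫ x, f x / g x * Real.log (f x / g x) ∂μ.withDensity fun x => ENNReal.ofReal (g x) := by
  rw [integral_withDensity_eq_integral_toReal_smul hg.ennreal_ofReal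
    (.of_forall fun _ => ENNReal.ofReal_lt_top)]
  refine integral_congr_ae (.of_forall fun x => ?_)
  have hg_ne := (hg_pos x).ne'
  simp only [ENNReal.toReal_ofReal (hg_pos x).le, smul_eq_mul]
  field_simp

theorem mutual_information_eq_neg_copula_entropy_general
    (n : ℕ)
    (p : (Fin n → ℝ) → ℝ)            -- joint density of X
    (pm : Fin n → ℝ → ℝ)             -- marginal densities
    (F : Fin n → ℝ → ℝ)              -- marginal CDFs
    (Finv : Fin n → ℝ → ℝ)           -- inverses of the marginal CDFs
    (c : (Fin n → ℝ) → ℝ)            -- copula density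
    -- p is a probability density:
    (hp_meas : Measurable p)
    (hp_nonneg : ∀ x, 0 ≤ p x)
    (hp_prob : ∫ x, p x = 1)
    -- pm i is the i-th marginal density of the law of X:
    (hpm_meas : ∀ i, Measurable (pm i))
    (hpm_pos : ∀ i t, 0 < pm i t)
    (h_marg : ∀ i : Fin n,
      Measure.map (fun x => x i) (volume.withDensity fun x => ENNReal.ofReal (p x))
        = volume.withDensity fun t => ENNReal.ofReal (pm i t))
    -- F i is the CDF of the i-th marginal, continuous and strictly increasing:
    (hF : ∀ i t, F i t = ∫ s in Set.Iic t, pm i s)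
    (hF_mono : ∀ i, StrictMono (F i))
    (hFinv_right : ∀ i, ∀ u ∈ Set.Ioo (0 : ℝ) 1, F i (Finv i u) = u)
    -- the copula density:
    (hc : ∀ u, c u = p (fun i => Finv i (u i)) / ∏ i, pm i (Finv i (u i))) :
    ∫ x, p x * Real.log (p x / ∏ i, pm i (x i))
      = ∫ u in Set.univ.pi (fun _ : Fin n => Set.Ioo (0 : ℝ) 1),
          c u * Real.log (c u) := by
  set μm : Fin n → Measure ℝ := fun i => volume.withDensity fun t => ENNReal.ofReal (pm i t)
  have := isProbabilityMeasure_withDensity_ofReal (.of_forall hp_nonneg) hp_prob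
  have hμm : ∀ i, IsProbabilityMeasure (μm i) := fun i => by
    rw [show μm i = _ from (h_marg i).symm]
    exact Measure.isProbabilityMeasure_map (measurable_pi_apply i).aemeasurable
  have hFinv : ∀ i, ∀ u ∈ Ioo (0 : ℝ) 1, ∀ t, Finv i u ≤ t ↔ u ≤ cdf (μm i) t := by
    intro i u hu t
    rw [cdf_withDensity_ofReal (hpm_meas i).aestronglyMeasurable
      (.of_forall fun s => (hpm_pos i s).le), ← hF, ← (hF_mono i).le_iff_le, hFinv_right i u hu]
  have hpi : Measure.pi μm = volume.withDensity fun x => ENNReal.ofReal (∏ i, pm i (x i)) := by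
    simp_rw [μm, Measure.pi_withDensity _ fun i => (hpm_meas i).ennreal_ofReal, ← volume_pi,
      ENNReal.ofReal_prod_of_nonneg fun i _ => (hpm_pos i _).le]
  have hQ := map_restrict_pi_Ioo_eq_pi hFinv
  set φ : (Fin n → ℝ) → ℝ := fun x => p x / ∏ i, pm i (x i)
  calc ∫ x, p x * Real.log (p x / ∏ i, pm i (x i))
      = ∫ x, φ x * Real.log (φ x) ∂Measure.pi μm := by
        rw [hpi, integral_mul_log_div_eq_integral_withDensity (by fun_prop)
          fun x => Finset.prod_pos fun i _ => hpm_pos i (x i)]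
    _ = ∫ u in univ.pi fun _ : Fin n => Ioo (0 : ℝ) 1, φ (fun i => Finv i (u i))
          * Real.log (φ fun i => Finv i (u i)) := by
        rw [← hQ, integral_map (.of_map_ne_zero (hQ ▸ IsProbabilityMeasure.ne_zero _))
          (by fun_prop : Measurable fun x => φ x * Real.log (φ x)).aestronglyMeasurable]
    _ = ∫ u in univ.pi fun _ : Fin n => Ioo (0 : ℝ) 1, c u * Real.log (c u) := by
        simp only [φ, hc]

/-- **Mutual information equals negative copula entropy** (Theorem 1 of the paper).
`p` is the joint density of the random vector `X` on `ℝⁿ`, `pm i` the (strictly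
positive) marginal densities, `F i` the (continuous, strictly increasing) marginal
CDFs with inverses `Finv i`, and `c` the copula density
`c u = p (F₁⁻¹ u₁, …, Fₙ⁻¹ uₙ) / ∏ᵢ pᵢ (Fᵢ⁻¹ uᵢ)`.  Then
`∫ p log (p / ∏ pᵢ) = ∫_{(0,1)ⁿ} c log c`. -/
theorem mutual_information_eq_neg_copula_entropy
    (n : ℕ)
    (p : (Fin n → ℝ) → ℝ)            -- joint density of X
    (pm : Fin n → ℝ → ℝ)             -- marginal densities
    (F : Fin n → ℝ → ℝ)              -- marginal CDFs
    (Finv : Fin n → ℝ → ℝ)           -- inverses of the marginal CDFs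
    (c : (Fin n → ℝ) → ℝ)            -- copula density
    -- p is a probability density:
    (hp_meas : Measurable p)
    (hp_nonneg : ∀ x, 0 ≤ p x)
    (hp_prob : ∫ x, p x = 1)
    -- pm i is the i-th marginal density of the law of X:
    (hpm_meas : ∀ i, Measurable (pm i))
    (hpm_pos : ∀ i t, 0 < pm i t)
    (h_marg : ∀ i : Fin n,
      Measure.map (fun x => x i) (volume.withDensity fun x => ENNReal.ofReal (p x))
        = volume.withDensity fun t => ENNReal.ofReal (pm i t))
    -- F i is the CDF of the i-th marginal, continuous and strictly increasing:
    (hF : ∀ i t, F i t = ∫ s in Set.Iic t, pm i s)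
    (hF_cont : ∀ i, Continuous (F i))
    (hF_mono : ∀ i, StrictMono (F i))
    (hFinv_left : ∀ i t, Finv i (F i t) = t)
    (hFinv_right : ∀ i, ∀ u ∈ Set.Ioo (0 : ℝ) 1, F i (Finv i u) = u)
    -- the copula density:
    (hc : ∀ u, c u = p (fun i => Finv i (u i)) / ∏ i, pm i (Finv i (u i)))
    -- integrability assumptions:
    (h_int₁ : Integrable (fun x => p x * Real.log (p x / ∏ i, pm i (x i))))
    (h_int₂ : IntegrableOn (fun u => c u * Real.log (c u))
      (Set.univ.pi fun _ : Fin n => Set.Ioo (0 : ℝ) 1)) :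
    ∫ x, p x * Real.log (p x / ∏ i, pm i (x i))
      = ∫ u in Set.univ.pi (fun _ : Fin n => Set.Ioo (0 : ℝ) 1),
          c u * Real.log (c u) :=
  mutual_information_eq_neg_copula_entropy_general n p pm F Finv c hp_meas hp_nonneg hp_prob
    hpm_meas hpm_pos h_marg hF hF_mono hFinv_right hc
end

section
/- Let X = (X₁,…,Xₙ) be a random vector on ℝⁿ whose law has a density p with respect to Lebesgue measure, with marginal densities p₁,…,pₙ that are strictly positive, and with marginal cumulative distribution functions F₁,…,Fₙ that are continuous and strictly increasing. Define the copula density c : (0,1)ⁿ → ℝ by c(u₁,…,uₙ) = p(F₁⁻¹(u₁),…,Fₙ⁻¹(uₙ)) / ∏ᵢ pᵢ(Fᵢ⁻¹(uᵢ)). Assume the functions x ↦ p(x) log p(x), xᵢ ↦ pᵢ(xᵢ) log pᵢ(xᵢ) for each i, and u ↦ c(u) log c(u) are Lebesgue integrable. Then the joint differential entropy decomposes as the sum of the marginal differential entropies plus the copula entropy: −∫_{ℝⁿ} p(x) log p(x) dx = ∑ᵢ ( −∫_ℝ pᵢ(t) log pᵢ(t) dt ) + ( −∫_{(0,1)ⁿ}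 c(u) log c(u) du ). -/
/-!
The probability integral transform `Φ x = (F₁ x₁, …, Fₙ xₙ)` is injective and pushes the product
of the marginal laws forward to the uniform law on the open unit cube. Changing variables along `Φ`
turns the copula entropy integral into `∫ (∏ pᵢ xᵢ) · c (Φ x) log c (Φ x) dx`, and since
`c (Φ x) = p x / ∏ pᵢ xᵢ` the integrand is `p log p - ∑ᵢ p log pᵢ(xᵢ)`. Each cross term only
depends on one coordinate, so integrating it against the joint law gives the `i`-th marginal
entropy.
-/

open MeasureTheory Set

namespace MeasureTheory

section WithDensityOfReal

variable {α β : Type*} [MeasurableSpace α] [MeasurableSpace β] {μ : Measure α} {ν : Measure β}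
  {f : α → ℝ}

theorem measureReal_withDensity_ofReal (hf : Measurable f) (hf0 : ∀ x, 0 ≤ f x) {s : Set α}
    (hs : MeasurableSet s) :
    (μ.withDensity fun x => ENNReal.ofReal (f x)).real s = ∫ x in s, f x ∂μ := by
  rw [measureReal_def, withDensity_apply _ hs, integral_eq_lintegral_of_nonneg_ae
    (.of_forall hf0) hf.aestronglyMeasurable]

theorem integral_withDensity_ofReal (hf : Measurable f) (hf0 : ∀ x, 0 ≤ f x) (g : α → ℝ) :
    ∫ x, g x ∂μ.withDensity (fun x => ENNReal.ofReal (f x)) = ∫ x, f x * g x ∂μ := by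
  rw [integral_withDensity_eq_integral_toReal_smul hf.ennreal_ofReal
    (.of_forall fun _ => ENNReal.ofReal_lt_top)]
  simp_rw [ENNReal.toReal_ofReal (hf0 _), smul_eq_mul]

theorem integrable_withDensity_ofReal_iff (hf : Measurable f) (hf0 : ∀ x, 0 ≤ f x)
    {g : α → ℝ} :
    Integrable g (μ.withDensity fun x => ENNReal.ofReal (f x))
      ↔ Integrable (fun x => f x * g x) μ := by
  rw [integrable_withDensity_iff_integrable_smul' hf.ennreal_ofReal
    (.of_forall fun _ => ENNReal.ofReal_lt_top)]
  simp_rw [ENNReal.toReal_ofReal (hf0 _), smul_eq_mul]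

theorem integrable_of_isFiniteMeasure_withDensity_ofReal (hf : Measurable f) (hf0 : ∀ x, 0 ≤ f x)
    [IsFiniteMeasure (μ.withDensity fun x => ENNReal.ofReal (f x))] : Integrable f μ := by
  refine ⟨hf.aestronglyMeasurable, (hasFiniteIntegral_iff_ofReal (.of_forall hf0)).mpr ?_⟩
  rw [← setLIntegral_univ, ← withDensity_apply _ .univ]
  exact measure_lt_top _ _

variable {φ : α → β} {q : β → ℝ} {g : β → ℝ}

theorem integral_mul_comp_of_map_withDensity_ofReal (hφ : Measurable φ) (hf : Measurable f)
    (hf0 : ∀ x, 0 ≤ f x) (hq : Measurable q) (hq0 : ∀ y, 0 ≤ q y)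
    (hmap : (μ.withDensity fun x => ENNReal.ofReal (f x)).map φ
      = ν.withDensity fun y => ENNReal.ofReal (q y))
    (hg : AEStronglyMeasurable g (ν.withDensity fun y => ENNReal.ofReal (q y))) :
    ∫ x, f x * g (φ x) ∂μ = ∫ y, q y * g y ∂ν := by
  rw [← integral_withDensity_ofReal hf hf0, ← integral_withDensity_ofReal hq hq0, ← hmap,
    integral_map hφ.aemeasurable (hmap ▸ hg)]

theorem integrable_mul_comp_of_map_withDensity_ofReal (hφ : Measurable φ) (hf : Measurable f)
    (hf0 : ∀ x, 0 ≤ f x) (hq : Measurable q) (hq0 : ∀ y, 0 ≤ q y)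
    (hmap : (μ.withDensity fun x => ENNReal.ofReal (f x)).map φ
      = ν.withDensity fun y => ENNReal.ofReal (q y))
    (hg : AEStronglyMeasurable g (ν.withDensity fun y => ENNReal.ofReal (q y)))
    (hqg : Integrable (fun y => q y * g y) ν) :
    Integrable (fun x => f x * g (φ x)) μ := by
  rw [← integrable_withDensity_ofReal_iff hf hf0]
  refine (integrable_map_measure (hmap ▸ hg) hφ.aemeasurable).mp ?_
  rwa [hmap, integrable_withDensity_ofReal_iff hq hq0]

end WithDensityOfReal

theorem Measure.pi_withDensity_ofReal {ι : Type*} [Fintype ι] {α : ι → Type*}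
    [∀ i, MeasurableSpace (α i)] (μ : ∀ i, Measure (α i)) [∀ i, SigmaFinite (μ i)]
    {f : ∀ i, α i → ℝ} (hf0 : ∀ i t, 0 ≤ f i t) (hf : ∀ i, Integrable (f i) (μ i)) :
    Measure.pi (fun i => (μ i).withDensity fun t => ENNReal.ofReal (f i t))
      = (Measure.pi μ).withDensity fun x => ENNReal.ofReal (∏ i, f i (x i)) := by
  refine Measure.pi_eq fun s hs => ?_
  rw [withDensity_apply _ (.univ_pi hs), Measure.restrict_pi_pi,
    ← ofReal_integral_eq_lintegral_ofReal (Integrable.fintype_prod_dep fun i => (hf i).restrict)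
      (.of_forall fun x => Finset.prod_nonneg fun i _ => hf0 i (x i)),
    integral_fintype_prod_eq_prod,
    ENNReal.ofReal_prod_of_nonneg fun i _ => setIntegral_nonneg (hs i) fun t _ => hf0 i t]
  refine Finset.prod_congr rfl fun i _ => ?_
  rw [withDensity_apply _ (hs i), ofReal_integral_eq_lintegral_ofReal (hf i).restrict
    (.of_forall (hf0 i))]

theorem map_eq_restrict_Ioo_of_strictMono_cdf {ν : Measure ℝ} [IsProbabilityMeasure ν]
    {F G : ℝ → ℝ} (hF : ∀ t, F t = ν.real (Iic t)) (hmono : StrictMono F)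
    (hG : ∀ u ∈ Ioo (0 : ℝ) 1, F (G u) = u) :
    ν.map F = volume.restrict (Ioo 0 1) := by
  -- `F` takes values in `[0, 1]`, and strict monotonicity keeps it off the endpoints.
  have hF01 : ∀ t, F t ∈ Ioo (0 : ℝ) 1 := fun t =>
    ⟨(hF (t - 1) ▸ measureReal_nonneg).trans_lt (hmono (sub_one_lt t)),
      (hmono (lt_add_one t)).trans_le (hF (t + 1) ▸ measureReal_le_one)⟩
  have := Measure.isProbabilityMeasure_map (μ := ν) hmono.monotone.measurable.aemeasurable
  rw [Measure.restrict_congr_set Ioo_ae_eq_Ioc]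
  refine Measure.ext_of_Iic _ _ fun a => ?_
  rw [Measure.map_apply hmono.monotone.measurable measurableSet_Iic,
    Measure.restrict_apply measurableSet_Iic]
  rcases lt_or_ge a 1 with ha1 | ha1
  · rw [Iic_inter_Ioc_of_le ha1.le, Real.volume_Ioc, sub_zero]
    rcases le_or_gt a 0 with ha0 | ha0
    · have h1 : F ⁻¹' Iic a = ∅ := eq_empty_of_forall_notMem fun t ht =>
        (ha0.trans_lt (hF01 t).1).not_ge ht
      rw [h1, measure_empty, ENNReal.ofReal_of_nonpos ha0]
    · have h1 : F ⁻¹' Iic a = Iic (G a) := by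
        ext t
        rw [mem_preimage, mem_Iic, mem_Iic, ← hmono.le_iff_le (a := t), hG a ⟨ha0, ha1⟩]
      rw [h1, ← ofReal_measureReal, ← hF, hG a ⟨ha0, ha1⟩]
  · have h1 : F ⁻¹' Iic a = univ := eq_univ_of_forall fun t => ((hF01 t).2.le.trans ha1 : _)
    rw [h1, measure_univ, inter_eq_right.mpr (Ioc_subset_Iic_self.trans (Iic_subset_Iic.mpr ha1)),
      Real.volume_Ioc, sub_zero, ENNReal.ofReal_one]

theorem measurePreserving_pi_cdf {ι : Type*} [Fintype ι] {ν : ι → Measure ℝ}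
    [∀ i, IsProbabilityMeasure (ν i)] {F G : ι → ℝ → ℝ} (hF : ∀ i t, F i t = (ν i).real (Iic t))
    (hmono : ∀ i, StrictMono (F i)) (hG : ∀ i, ∀ u ∈ Ioo (0 : ℝ) 1, F i (G i u) = u) :
    MeasurePreserving (fun x i => F i (x i)) (Measure.pi ν)
      (volume.restrict (univ.pi fun _ : ι => Ioo (0 : ℝ) 1)) := by
  rw [volume_pi, Measure.restrict_pi_pi]
  exact measurePreserving_pi _ _ fun i => ⟨(hmono i).monotone.measurable,
    map_eq_restrict_Ioo_of_strictMono_cdf (hF i) (hmono i) (hG i)⟩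

end MeasureTheory

theorem prod_mul_div_prod_mul_log_div_prod {ι : Type*} (s : Finset ι) (p : ℝ) {a : ι → ℝ}
    (ha : ∀ i ∈ s, a i ≠ 0) :
    (∏ i ∈ s, a i) * ((p / ∏ i ∈ s, a i) * Real.log (p / ∏ i ∈ s, a i))
      = p * Real.log p - ∑ i ∈ s, p * Real.log (a i) := by
  have hq : ∏ i ∈ s, a i ≠ 0 := Finset.prod_ne_zero_iff.mpr ha
  rcases eq_or_ne p 0 with rfl | hp
  · simp
  rw [Real.log_div hp hq, Real.log_prod ha, ← Finset.mul_sum]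
  field_simp

theorem entropy_eq_sum_marginal_entropies_add_copula_entropy_general
    (n : ℕ)
    (p : (Fin n → ℝ) → ℝ)            -- joint density of X
    (pm : Fin n → ℝ → ℝ)             -- marginal densities
    (F : Fin n → ℝ → ℝ)              -- marginal CDFs
    (Finv : Fin n → ℝ → ℝ)           -- inverses of the marginal CDFs
    (c : (Fin n → ℝ) → ℝ)            -- copula density
    -- p is a probability density:
    (hp_meas : Measurable p)
    (hp_nonneg : ∀ x, 0 ≤ p x)
    (hp_prob : ∫ x, p x = 1)
    -- pm i is the i-th marginal density of the law of X:
    (hpm_meas : ∀ i, Measurable (pm i))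
    (hpm_pos : ∀ i t, 0 < pm i t)
    (h_marg : ∀ i : Fin n,
      Measure.map (fun x => x i) (volume.withDensity fun x => ENNReal.ofReal (p x))
        = volume.withDensity fun t => ENNReal.ofReal (pm i t))
    -- F i is the CDF of the i-th marginal, continuous and strictly increasing:
    (hF : ∀ i t, F i t = ∫ s in Set.Iic t, pm i s)
    (hF_mono : ∀ i, StrictMono (F i))
    (hFinv_left : ∀ i t, Finv i (F i t) = t)
    (hFinv_right : ∀ i, ∀ u ∈ Set.Ioo (0 : ℝ) 1, F i (Finv i u) = u)
    -- the copula density: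
    (hc : ∀ u, c u = p (fun i => Finv i (u i)) / ∏ i, pm i (Finv i (u i)))
    -- integrability assumptions:
    (h_int₁ : Integrable (fun x => p x * Real.log (p x)))
    (h_int₂ : ∀ i, Integrable (fun t => pm i t * Real.log (pm i t))) :
    -∫ x, p x * Real.log (p x)
      = (∑ i, -∫ t, pm i t * Real.log (pm i t))
        + (-∫ u in Set.univ.pi (fun _ : Fin n => Set.Ioo (0 : ℝ) 1),
            c u * Real.log (c u)) := by
  have hpm_nonneg i t : 0 ≤ pm i t := (hpm_pos i t).le
  have hμ : IsProbabilityMeasure (volume.withDensity fun x => ENNReal.ofReal (p x)) := by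
    rw [isProbabilityMeasure_iff_real, measureReal_withDensity_ofReal hp_meas hp_nonneg .univ,
      setIntegral_univ, hp_prob]
  have hν i : IsProbabilityMeasure (volume.withDensity fun t => ENNReal.ofReal (pm i t)) :=
    h_marg i ▸ Measure.isProbabilityMeasure_map (measurable_pi_apply i).aemeasurable
  have hpm_int i : Integrable (pm i) :=
    integrable_of_isFiniteMeasure_withDensity_ofReal (hpm_meas i) (hpm_nonneg i)
  have hΦ := measurePreserving_pi_cdf (fun i t => by
      rw [hF, measureReal_withDensity_ofReal (hpm_meas i) (hpm_nonneg i) measurableSet_Iic])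
    hF_mono hFinv_right
  have hΦ_emb : MeasurableEmbedding fun (x : Fin n → ℝ) i => F i (x i) :=
    hΦ.measurable.measurableEmbedding fun x y h =>
      funext fun i => (hF_mono i).injective (congrFun h i)
  have hν_pi : (Measure.pi fun i => volume.withDensity fun t => ENNReal.ofReal (pm i t))
      = volume.withDensity fun x => ENNReal.ofReal (∏ i, pm i (x i)) :=
    Measure.pi_withDensity_ofReal _ hpm_nonneg hpm_int
  have hcross i : ∫ x, p x * Real.log (pm i (x i)) = ∫ t, pm i t * Real.log (pm i t) :=
    integral_mul_comp_of_map_withDensity_ofReal (measurable_pi_apply i) hp_meas hp_nonneg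
      (hpm_meas i) (hpm_nonneg i) (h_marg i) (hpm_meas i).log.aestronglyMeasurable
  have hcross_int i : Integrable fun x => p x * Real.log (pm i (x i)) :=
    integrable_mul_comp_of_map_withDensity_ofReal (g := fun t => Real.log (pm i t))
      (measurable_pi_apply i) hp_meas hp_nonneg (hpm_meas i) (hpm_nonneg i) (h_marg i)
      (hpm_meas i).log.aestronglyMeasurable (h_int₂ i)
  have hcopula : ∫ u in Set.univ.pi (fun _ : Fin n => Set.Ioo (0 : ℝ) 1), c u * Real.log (c u)
      = (∫ x, p x * Real.log (p x)) - ∑ i, ∫ t, pm i t * Real.log (pm i t) := by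
    rw [← hΦ.integral_comp hΦ_emb, hν_pi,
      integral_withDensity_ofReal (by fun_prop) fun x =>
        Finset.prod_nonneg fun i _ => hpm_nonneg i (x i)]
    simp_rw [hc, hFinv_left, prod_mul_div_prod_mul_log_div_prod _ _ fun i _ => (hpm_pos i _).ne']
    rw [integral_sub h_int₁ (integrable_finsetSum _ fun i _ => hcross_int i),
      integral_finsetSum _ fun i _ => hcross_int i]
    simp_rw [hcross]
  rw [hcopula, Finset.sum_neg_distrib]
  ring

/-- **Entropy decomposition via copula entropy** (Corollary 1 of the paper).
With `p` the joint density of `X` on `ℝⁿ`, `pm i` the strictly positive marginal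
densities, `F i` the continuous strictly increasing marginal CDFs with inverses
`Finv i`, and `c` the copula density, the joint differential entropy equals the sum
of the marginal differential entropies plus the copula entropy:
`H(X) = ∑ᵢ H(Xᵢ) + H_c(X)`. -/
theorem entropy_eq_sum_marginal_entropies_add_copula_entropy
    (n : ℕ)
    (p : (Fin n → ℝ) → ℝ)            -- joint density of X
    (pm : Fin n → ℝ → ℝ)             -- marginal densities
    (F : Fin n → ℝ → ℝ)              -- marginal CDFs
    (Finv : Fin n → ℝ → ℝ)           -- inverses of the marginal CDFs
    (c : (Fin n → ℝ) → ℝ)            -- copula density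
    -- p is a probability density:
    (hp_meas : Measurable p)
    (hp_nonneg : ∀ x, 0 ≤ p x)
    (hp_prob : ∫ x, p x = 1)
    -- pm i is the i-th marginal density of the law of X:
    (hpm_meas : ∀ i, Measurable (pm i))
    (hpm_pos : ∀ i t, 0 < pm i t)
    (h_marg : ∀ i : Fin n,
      Measure.map (fun x => x i) (volume.withDensity fun x => ENNReal.ofReal (p x))
        = volume.withDensity fun t => ENNReal.ofReal (pm i t))
    -- F i is the CDF of the i-th marginal, continuous and strictly increasing:
    (hF : ∀ i t, F i t = ∫ s in Set.Iic t, pm i s)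
    (hF_cont : ∀ i, Continuous (F i))
    (hF_mono : ∀ i, StrictMono (F i))
    (hFinv_left : ∀ i t, Finv i (F i t) = t)
    (hFinv_right : ∀ i, ∀ u ∈ Set.Ioo (0 : ℝ) 1, F i (Finv i u) = u)
    -- the copula density:
    (hc : ∀ u, c u = p (fun i => Finv i (u i)) / ∏ i, pm i (Finv i (u i)))
    -- integrability assumptions:
    (h_int₁ : Integrable (fun x => p x * Real.log (p x)))
    (h_int₂ : ∀ i, Integrable (fun t => pm i t * Real.log (pm i t)))
    (h_int₃ : IntegrableOn (fun u => c u * Real.log (c u))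
      (Set.univ.pi fun _ : Fin n => Set.Ioo (0 : ℝ) 1)) :
    -∫ x, p x * Real.log (p x)
      = (∑ i, -∫ t, pm i t * Real.log (pm i t))
        + (-∫ u in Set.univ.pi (fun _ : Fin n => Set.Ioo (0 : ℝ) 1),
            c u * Real.log (c u)) :=
  entropy_eq_sum_marginal_entropies_add_copula_entropy_general n p pm F Finv c hp_meas hp_nonneg
    hp_prob hpm_meas hpm_pos h_marg hF hF_mono hFinv_left hFinv_right hc h_int₁ h_int₂
end
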